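/- arXiv:1810.03592 — 5 statements merged into one kernel-verified Lean document; each statement's English description precedes it below -/
import Mathlib

section
/- For every subset I ⊆ {1,…,m}, z^OPT ≤ z^σ(I). -/
/-!
Pointwise, `F ≤ f^σ_I`: on the indices with `Y i > 0` the rectified residual `(max 0 t - y)²` is
dominated both by the unrectified `(t - y)²` and by `σ(t, y)`, while the terms with `i > m` are the
same on both sides (they form `φ`). Since `F ≥ 0`, taking infima preserves the inequality.
-/

/-- `σ(x, y) = (x - y)²` if `x > 2y`, and `σ(x, y) = y²` if `x ≤ 2y`. -/
noncomputable def sigmaFn (x y : ℝ) : ℝ := if x > 2 * y then (x - y) ^ 2 else y ^ 2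

lemma sq_max_zero_sub_le_sq_sub {t y : ℝ} (hy : 0 ≤ y) : (max 0 t - y) ^ 2 ≤ (t - y) ^ 2 := by
  rcases le_total t 0 with ht | ht
  · rw [max_eq_left ht]
    nlinarith
  · rw [max_eq_right ht]

lemma sq_max_zero_sub_le_sigmaFn {t y : ℝ} (hy : 0 ≤ y) : (max 0 t - y) ^ 2 ≤ sigmaFn t y := by
  unfold sigmaFn
  split_ifs with h
  · exact sq_max_zero_sub_le_sq_sub hy
  · rcases le_total t 0 with ht | ht
    · rw [max_eq_left ht]
      nlinarith
    · rw [max_eq_right ht]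
      nlinarith

lemma Finset.sum_le_sum_add_sum_sdiff {ι M : Type*} [DecidableEq ι] [AddCommMonoid M]
    [PartialOrder M] [IsOrderedAddMonoid M] {s I : Finset ι} (hI : I ⊆ s) {f g h : ι → M}
    (hg : ∀ i ∈ I, f i ≤ g i) (hh : ∀ i ∈ s \ I, f i ≤ h i) :
    ∑ i ∈ s, f i ≤ ∑ i ∈ I, g i + ∑ i ∈ s \ I, h i := by
  rw [← Finset.sum_sdiff hI, add_comm]
  exact add_le_add (Finset.sum_le_sum hg) (Finset.sum_le_sum hh)

theorem zopt_le_zsigma_general {p n m : ℕ} (hmn : m ≤ n)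
    (X : ℕ → Fin p → ℝ) (Y : ℕ → ℝ)
    (hYpos : ∀ i, 1 ≤ i → i ≤ m → 0 < Y i)
    (F : (Fin p → ℝ) × ℝ → ℝ)
    (hF : ∀ b, F b =
      ∑ i ∈ Finset.Icc 1 n, (max 0 (∑ j, X i j * b.1 j + b.2) - Y i) ^ 2)
    (φ : (Fin p → ℝ) × ℝ → ℝ)
    (hφ : ∀ b, φ b =
      ∑ i ∈ Finset.Icc (m + 1) n, (max 0 (∑ j, X i j * b.1 j + b.2) - Y i) ^ 2)
    (fσ : Finset ℕ → (Fin p → ℝ) × ℝ → ℝ)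
    (hfσ : ∀ I b, fσ I b =
      ∑ i ∈ I, ((∑ j, X i j * b.1 j + b.2) - Y i) ^ 2
      + ∑ i ∈ Finset.Icc 1 m \ I, sigmaFn (∑ j, X i j * b.1 j + b.2) (Y i)
      + φ b)
    (I : Finset ℕ) (hI : I ⊆ Finset.Icc 1 m) :
    (⨅ b : (Fin p → ℝ) × ℝ, F b) ≤ ⨅ b : (Fin p → ℝ) × ℝ, fσ I b := by
  have hsplit : Finset.Icc 1 n = Finset.Icc 1 m ∪ Finset.Icc (m + 1) n := by
    ext i
    simp only [Finset.mem_union, Finset.mem_Icc]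
    omega
  have hdisj : Disjoint (Finset.Icc 1 m) (Finset.Icc (m + 1) n) :=
    Finset.disjoint_left.mpr fun i hi hi' => by
      simp only [Finset.mem_Icc] at hi hi'
      omega
  have hYnonneg : ∀ i ∈ Finset.Icc 1 m, 0 ≤ Y i := fun i hi =>
    (hYpos i (Finset.mem_Icc.mp hi).1 (Finset.mem_Icc.mp hi).2).le
  have hpointwise : ∀ b, F b ≤ fσ I b := fun b => by
    rw [hF, hfσ, hφ, hsplit, Finset.sum_union hdisj]
    gcongr
    exact Finset.sum_le_sum_add_sum_sdiff hI
      (fun i hi => sq_max_zero_sub_le_sq_sub (hYnonneg i (hI hi)))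
      (fun i hi => sq_max_zero_sub_le_sigmaFn (hYnonneg i (Finset.mem_sdiff.mp hi).1))
  have hF_nonneg : ∀ b, 0 ≤ F b := fun b => by
    rw [hF]
    exact Finset.sum_nonneg fun i _ => sq_nonneg _
  exact ciInf_mono ⟨0, Set.forall_mem_range.mpr hF_nonneg⟩ hpointwise

/-- For every subset `I ⊆ {1, …, m}`, `z^OPT ≤ z^σ(I)`. -/
theorem zopt_le_zsigma {p n m : ℕ} (hp : 0 < p) (hn : 0 < n) (hmn : m ≤ n)
    (X : ℕ → Fin p → ℝ) (Y : ℕ → ℝ)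
    (hYpos : ∀ i, 1 ≤ i → i ≤ m → 0 < Y i)
    (hYneg : ∀ i, m < i → i ≤ n → Y i ≤ 0)
    (F : (Fin p → ℝ) × ℝ → ℝ)
    (hF : ∀ b, F b =
      ∑ i ∈ Finset.Icc 1 n, (max 0 (∑ j, X i j * b.1 j + b.2) - Y i) ^ 2)
    (φ : (Fin p → ℝ) × ℝ → ℝ)
    (hφ : ∀ b, φ b =
      ∑ i ∈ Finset.Icc (m + 1) n, (max 0 (∑ j, X i j * b.1 j + b.2) - Y i) ^ 2)
    (fσ : Finset ℕ → (Fin p → ℝ) × ℝ → ℝ)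
    (hfσ : ∀ I b, fσ I b =
      ∑ i ∈ I, ((∑ j, X i j * b.1 j + b.2) - Y i) ^ 2
      + ∑ i ∈ Finset.Icc 1 m \ I, sigmaFn (∑ j, X i j * b.1 j + b.2) (Y i)
      + φ b)
    (I : Finset ℕ) (hI : I ⊆ Finset.Icc 1 m) :
    (⨅ b : (Fin p → ℝ) × ℝ, F b) ≤ ⨅ b : (Fin p → ℝ) × ℝ, fσ I b :=
  zopt_le_zsigma_general hmn X Y hYpos F hF φ hφ fσ hfσ I hI
end

section
/- Assume additionally that Y_1 ≤ Y_2 ≤ … ≤ Y_m and that the problem is realizable, i.e. there exists (β*, β₀*) ∈ ℝ^p × ℝ with F(β*, β₀*) = 0. Then z^approx = 0 = z^OPT; in other words, in the realizable case the approximation algorithm attains the global optimum. -/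
/-- The family `𝔽_k` of subsets `I ⊆ {1,…,m}` whose complement in `{1,…,m}` has the form
`{1,…,i₁} ∪ {i₂,…,i_j}` for some `j ∈ {1,…,k}` and `0 ≤ i₁ < i₂ < … < i_j ≤ m`
(the finite set `t` collects the `j - 1` indices `i₂ < … < i_j`). -/
def approxFamily (m k : ℕ) : Set (Finset ℕ) :=
  {I | I ⊆ Finset.Icc 1 m ∧
    ∃ (j i₁ : ℕ) (t : Finset ℕ),
      1 ≤ j ∧ j ≤ k ∧ i₁ ≤ m ∧ t.card = j - 1 ∧
      (∀ x ∈ t, i₁ < x ∧ x ≤ m) ∧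
      Finset.Icc 1 m \ I = Finset.Icc 1 i₁ ∪ t}

open Finset

theorem ciInf_eq_of_forall_le_of_eq {ι α : Type*} [ConditionallyCompleteLattice α] {f : ι → α}
    {a : α} (h : ∀ i, a ≤ f i) (i₀ : ι) (h₀ : f i₀ = a) : ⨅ i, f i = a :=
  haveI : Nonempty ι := ⟨i₀⟩
  (show IsLeast (Set.range f) a from ⟨⟨i₀, h₀⟩, Set.forall_mem_range.2 h⟩).isGLB.ciInf_eq

theorem Finset.sum_sq_sub_eq_zero_iff {ι : Type*} {s : Finset ι} {a b : ι → ℝ} :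
    ∑ i ∈ s, (a i - b i) ^ 2 = 0 ↔ ∀ i ∈ s, a i = b i := by
  simp only [sum_eq_zero_iff_of_nonneg fun i _ ↦ sq_nonneg (a i - b i), sq_eq_zero_iff, sub_eq_zero]

theorem max_zero_eq_iff_of_pos {x y : ℝ} (hy : 0 < y) : max 0 x = y ↔ x = y := by
  refine ⟨fun h ↦ ?_, fun h ↦ h ▸ max_eq_right (h ▸ hy.le)⟩
  have hx : 0 < x := (lt_max_iff.1 (h ▸ hy)).resolve_left (lt_irrefl 0)
  rwa [max_eq_right hx.le] at h

theorem sigmaFn_nonneg (x y : ℝ) : 0 ≤ sigmaFn x y := by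
  unfold sigmaFn
  split_ifs <;> positivity

theorem Icc_mem_approxFamily {m k : ℕ} (hk : 1 ≤ k) : Icc 1 m ∈ approxFamily m k :=
  ⟨subset_rfl, 1, 0, ∅, le_rfl, hk, m.zero_le, rfl, by simp, by simp⟩

theorem approx_realizable_general {p n m k : ℕ} (hmn : m ≤ n)
    (hk1 : 1 ≤ k)
    (X : ℕ → Fin p → ℝ) (Y : ℕ → ℝ)
    (hYpos : ∀ i, 1 ≤ i → i ≤ m → 0 < Y i)
    (F : (Fin p → ℝ) × ℝ → ℝ)
    (hF : ∀ b, F b =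
      ∑ i ∈ Finset.Icc 1 n, (max 0 (∑ j, X i j * b.1 j + b.2) - Y i) ^ 2)
    (φ : (Fin p → ℝ) × ℝ → ℝ)
    (hφ : ∀ b, φ b =
      ∑ i ∈ Finset.Icc (m + 1) n, (max 0 (∑ j, X i j * b.1 j + b.2) - Y i) ^ 2)
    (fσ : Finset ℕ → (Fin p → ℝ) × ℝ → ℝ)
    (hfσ : ∀ I b, fσ I b =
      ∑ i ∈ I, ((∑ j, X i j * b.1 j + b.2) - Y i) ^ 2
      + ∑ i ∈ Finset.Icc 1 m \ I, sigmaFn (∑ j, X i j * b.1 j + b.2) (Y i)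
      + φ b)
    (hrealizable : ∃ b : (Fin p → ℝ) × ℝ, F b = 0)
    (zopt zapprox : ℝ)
    (hzopt : zopt = ⨅ b : (Fin p → ℝ) × ℝ, F b)
    (hzapprox : zapprox =
      ⨅ I : approxFamily m k, ⨅ b : (Fin p → ℝ) × ℝ, fσ (I : Finset ℕ) b) :
    zapprox = 0 ∧ zopt = 0 := by
  obtain ⟨b, hb⟩ := hrealizable
  have hfit : ∀ i ∈ Icc 1 n, max 0 (∑ j, X i j * b.1 j + b.2) = Y i :=
    sum_sq_sub_eq_zero_iff.1 ((hF b).symm.trans hb)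
  have hφb : φ b = 0 := by
    rw [hφ]
    exact sum_sq_sub_eq_zero_iff.2 fun i hi ↦ hfit i (Icc_subset_Icc (by omega) le_rfl hi)
  have hfit_pos : ∀ i ∈ Icc 1 m, ∑ j, X i j * b.1 j + b.2 = Y i := fun i hi ↦ by
    obtain ⟨h1, h2⟩ := mem_Icc.1 hi
    exact (max_zero_eq_iff_of_pos (hYpos i h1 h2)).1 (hfit i (mem_Icc.2 ⟨h1, h2.trans hmn⟩))
  have hfσb : fσ (Icc 1 m) b = 0 := by
    rw [hfσ, hφb, sdiff_self, bot_eq_empty, sum_empty, sum_sq_sub_eq_zero_iff.2 hfit_pos,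
      add_zero, add_zero]
  have hfσ_nonneg : ∀ I b, 0 ≤ fσ I b := fun I b ↦ by
    rw [hfσ, hφ]
    have := sum_nonneg fun i (_ : i ∈ Icc 1 m \ I) ↦ sigmaFn_nonneg (∑ j, X i j * b.1 j + b.2) (Y i)
    positivity
  have hF_nonneg : ∀ b, 0 ≤ F b := fun b ↦ by rw [hF]; positivity
  constructor
  · rw [hzapprox]
    exact ciInf_eq_of_forall_le_of_eq (fun I ↦ le_ciInf (hfσ_nonneg I))
      ⟨_, Icc_mem_approxFamily hk1⟩ (ciInf_eq_of_forall_le_of_eq (hfσ_nonneg _) b hfσb)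
  · rw [hzopt]
    exact ciInf_eq_of_forall_le_of_eq hF_nonneg b hb

/-- if `Y₁ ≤ … ≤ Y_m` and the problem is realizable (some `(β*, β₀*)` has
`F(β*, β₀*) = 0`), then `z^approx = 0 = z^OPT`: the approximation algorithm attains the
global optimum. -/
theorem approx_realizable {p n m k : ℕ} (hp : 0 < p) (hn : 0 < n) (hmn : m ≤ n)
    (hk1 : 1 ≤ k) (hkn : k ≤ n)
    (X : ℕ → Fin p → ℝ) (Y : ℕ → ℝ)
    (hYpos : ∀ i, 1 ≤ i → i ≤ m → 0 < Y i)
    (hYneg : ∀ i, m < i → i ≤ n → Y i ≤ 0)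
    (hYsorted : ∀ i j, 1 ≤ i → i ≤ j → j ≤ m → Y i ≤ Y j)
    (F : (Fin p → ℝ) × ℝ → ℝ)
    (hF : ∀ b, F b =
      ∑ i ∈ Finset.Icc 1 n, (max 0 (∑ j, X i j * b.1 j + b.2) - Y i) ^ 2)
    (φ : (Fin p → ℝ) × ℝ → ℝ)
    (hφ : ∀ b, φ b =
      ∑ i ∈ Finset.Icc (m + 1) n, (max 0 (∑ j, X i j * b.1 j + b.2) - Y i) ^ 2)
    (fσ : Finset ℕ → (Fin p → ℝ) × ℝ → ℝ)
    (hfσ : ∀ I b, fσ I b =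
      ∑ i ∈ I, ((∑ j, X i j * b.1 j + b.2) - Y i) ^ 2
      + ∑ i ∈ Finset.Icc 1 m \ I, sigmaFn (∑ j, X i j * b.1 j + b.2) (Y i)
      + φ b)
    (hrealizable : ∃ b : (Fin p → ℝ) × ℝ, F b = 0)
    (zopt zapprox : ℝ)
    (hzopt : zopt = ⨅ b : (Fin p → ℝ) × ℝ, F b)
    (hzapprox : zapprox =
      ⨅ I : approxFamily m k, ⨅ b : (Fin p → ℝ) × ℝ, fσ (I : Finset ℕ) b) :
    zapprox = 0 ∧ zopt = 0 :=
  approx_realizable_general hmn hk1 X Y hYpos F hF φ hφ fσ hfσ hrealizable zopt zapprox hzopt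
    hzapprox
end

section
/- For every real β₀, the infimum over x ∈ ℝ of θ(x, β₀) equals 2β₀² − 4β₀ + 2 when β₀ ≥ 1 − √2/2, and equals 1 when β₀ ≤ 1 − √2/2. -/
noncomputable def thetaFn (x β₀ : ℝ) : ℝ :=
  (max 0 (x + β₀) - 1) ^ 2 + (max 0 (-x + β₀) - 1) ^ 2

/-!
On `|x| ≤ β₀` both clipped terms are active and `θ = 2(β₀ - 1)² + 2x²`, minimised at `x = 0`.
For `|x| ≥ β₀` one term is clipped to `0`, so `θ = (max 0 (|x| + β₀) - 1)² + 1 ≥ 1`, with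
equality at `x = 1 - β₀` when `β₀ ≤ 1/2`; for `β₀ ≥ 1/2` this branch is at least
`(2β₀ - 1)² + 1 = 2(β₀ - 1)² + 2β₀²`. Which branch wins is decided by the sign of
`2(β₀ - 1)² - 1`, whose root is `1 - √2/2`.
-/

lemma ciInf_eq_of_forall_le_of_eq_s11 {ι α : Type*} [ConditionallyCompleteLinearOrder α]
    {f : ι → α} {m : α} (i : ι) (h : ∀ j, m ≤ f j) (hi : f i = m) : ⨅ j, f j = m :=
  haveI : Nonempty ι := ⟨i⟩
  ciInf_eq_of_forall_ge_of_forall_gt_exists_lt h fun _ hw => ⟨i, hi ▸ hw⟩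

lemma two_mul_sub_one_sq_sub_one (b : ℝ) :
    2 * (b - 1) ^ 2 - 1 = 2 * (b - (1 - √2 / 2)) * (b - (1 + √2 / 2)) := by
  have h2 : √2 ^ 2 = 2 := Real.sq_sqrt zero_le_two
  linear_combination h2 / 2

lemma one_sub_sqrt_two_div_two_pos : 0 < 1 - √2 / 2 := by
  have := (Real.sqrt_lt' two_pos).mpr (by norm_num : (2 : ℝ) < 2 ^ 2)
  linarith

namespace thetaFn

variable {x b : ℝ}

lemma neg_left (x b : ℝ) : thetaFn (-x) b = thetaFn x b := by
  simp only [thetaFn, neg_neg]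
  ring

lemma abs_left (x b : ℝ) : thetaFn |x| b = thetaFn x b := by
  rcases abs_choice x with h | h <;> rw [h]
  exact neg_left x b

lemma of_abs_le (h : |x| ≤ b) : thetaFn x b = 2 * (b - 1) ^ 2 + 2 * x ^ 2 := by
  obtain ⟨h₁, h₂⟩ := abs_le.mp h
  rw [thetaFn, max_eq_right (by linarith), max_eq_right (by linarith)]
  ring

lemma of_le (h : b ≤ x) : thetaFn x b = (max 0 (x + b) - 1) ^ 2 + 1 := by
  rw [thetaFn, max_eq_left (by linarith : -x + b ≤ 0)]
  ring

lemma two_mul_sub_one_sq_le (hb : 1 - √2 / 2 ≤ b) (x : ℝ) :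
    2 * (b - 1) ^ 2 ≤ thetaFn x b := by
  have hb₀ : 0 ≤ b := by linarith [one_sub_sqrt_two_div_two_pos]
  rw [← abs_left x b]
  rcases le_total |x| b with h | h
  · rw [of_abs_le (by rwa [abs_abs])]
    exact le_add_of_nonneg_right (by positivity)
  · rw [of_le h, max_eq_right (by positivity)]
    rcases le_total (1 / 2) b with hb' | hb'
    · nlinarith [mul_le_mul h h (by linarith) (by linarith : (0 : ℝ) ≤ |x|)]
    · have := two_mul_sub_one_sq_sub_one b
      nlinarith [mul_nonpos_of_nonneg_of_nonpos (by linarith : 0 ≤ b - (1 - √2 / 2))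
        (by linarith [Real.sqrt_nonneg 2] : b - (1 + √2 / 2) ≤ 0)]

lemma one_le (hb : b ≤ 1 - √2 / 2) (x : ℝ) : 1 ≤ thetaFn x b := by
  rw [← abs_left x b]
  rcases le_total |x| b with h | h
  · have := two_mul_sub_one_sq_sub_one b
    rw [of_abs_le (by rwa [abs_abs])]
    nlinarith [sq_nonneg x, mul_nonneg_of_nonpos_of_nonpos (by linarith : b - (1 - √2 / 2) ≤ 0)
      (by linarith [Real.sqrt_nonneg 2] : b - (1 + √2 / 2) ≤ 0)]
  · rw [of_le h]
    exact le_add_of_nonneg_left (sq_nonneg _)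

lemma zero_left (hb : 0 ≤ b) : thetaFn 0 b = 2 * (b - 1) ^ 2 := by
  rw [of_abs_le (by rwa [abs_zero])]
  ring

lemma one_sub_self (hb : b ≤ 1 / 2) : thetaFn (1 - b) b = 1 := by
  rw [of_le (by linarith), sub_add_cancel, max_eq_right zero_le_one]
  ring

end thetaFn

/-- for every real `β₀`, the infimum over `x ∈ ℝ` of `θ(x, β₀)` equals
`2β₀² − 4β₀ + 2` when `β₀ ≥ 1 − √2/2`, and equals `1` when `β₀ ≤ 1 − √2/2`. -/
theorem thetaFn_inf (β₀ : ℝ) :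
    (1 - Real.sqrt 2 / 2 ≤ β₀ → (⨅ x : ℝ, thetaFn x β₀) = 2 * β₀ ^ 2 - 4 * β₀ + 2)
    ∧ (β₀ ≤ 1 - Real.sqrt 2 / 2 → (⨅ x : ℝ, thetaFn x β₀) = 1) := by
  have hsqrt : 1 ≤ √2 := Real.one_le_sqrt.mpr one_le_two
  have hpos := one_sub_sqrt_two_div_two_pos
  refine ⟨fun hb => ?_, fun hb => ?_⟩
  · rw [show 2 * β₀ ^ 2 - 4 * β₀ + 2 = 2 * (β₀ - 1) ^ 2 by ring]
    exact ciInf_eq_of_forall_le_of_eq_s11 0 (thetaFn.two_mul_sub_one_sq_le hb)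
      (thetaFn.zero_left (by linarith))
  · exact ciInf_eq_of_forall_le_of_eq_s11 (1 - β₀) (thetaFn.one_le hb)
      (thetaFn.one_sub_self (by linarith))
end

section
/- Let γ > 0 and Δ ≥ 0. Let U and V be independent real-valued random variables with finite second moments such that V has the centered Gaussian distribution N(0, γ²), E[U² · 1_{U ≤ 0}] ≤ Δ², and −E[U · 1_{U ≤ 0}] ≤ 1 + Δ². Then E[(U − V)² · 1_{V > 0} · 1_{U ≤ 0}] ≤ Δ²/2 + ((2 + 2Δ²)/√(2π)) · γ + γ²/2. -/
/-!
On `{V > 0, U ≤ 0}` expand `(U - V)² = U² - 2UV + V²`. By independence every term factors into a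
truncated moment of `U` times a half-line moment of `V ~ N(0, γ²)`:
`P(V > 0) = 1/2`, `E[V; V > 0] = γ/√(2π)` and `E[V²; V > 0] = γ²/2`, all read off from
`∫₀^∞ x^k e^{-x²/(2σ²)} dx = (√2 σ)^(k+1) Γ((k+1)/2) / 2`. The hypotheses bound the truncated
moments `E[U²; U ≤ 0]` and `-E[U; U ≤ 0]`, and `P(U ≤ 0) ≤ 1` bounds the last one.
-/

open Real MeasureTheory ProbabilityTheory Set

lemma integral_Ioi_pow_mul_exp_neg_sq_div (k : ℕ) {σ : ℝ} (hσ : 0 < σ) :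
    ∫ x in Ioi (0 : ℝ), x ^ k * exp (-x ^ 2 / (2 * σ ^ 2))
      = (√2 * σ) ^ (k + 1) / 2 * Gamma ((k + 1) / 2) := by
  set c := √2 * σ with hc_def
  have hc : 0 < c := by positivity
  have hc2 : c ^ 2 = 2 * σ ^ 2 := by rw [hc_def, mul_pow, sq_sqrt zero_le_two]
  have hstd : ∫ y in Ioi (0 : ℝ), y ^ k * exp (-y ^ 2) = 1 / 2 * Gamma ((k + 1) / 2) := by
    have h := integral_rpow_mul_exp_neg_rpow (p := 2) (q := k) two_pos
      (by linarith [(k.cast_nonneg : (0 : ℝ) ≤ k)])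
    simpa only [rpow_natCast, rpow_two] using h
  have hscale : ∀ y : ℝ, (c * y) ^ k * exp (-(c * y) ^ 2 / (2 * σ ^ 2))
      = c ^ k * (y ^ k * exp (-y ^ 2)) := by
    intro y
    have hexp : -(c * y) ^ 2 / (2 * σ ^ 2) = -y ^ 2 := by
      rw [mul_pow, hc2]
      field_simp
    rw [hexp, mul_pow, mul_assoc]
  have hsubst := integral_comp_mul_left_Ioi' (fun x => x ^ k * exp (-x ^ 2 / (2 * σ ^ 2))) 0 hc
  rw [mul_zero] at hsubst
  rw [← hsubst, smul_eq_mul]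
  simp_rw [hscale, integral_const_mul, hstd]
  ring

lemma gaussianPDFReal_zero_sq {σ : ℝ} (hσ : 0 < σ) (x : ℝ) :
    gaussianPDFReal 0 (σ ^ 2).toNNReal x = (√(2 * π) * σ)⁻¹ * exp (-x ^ 2 / (2 * σ ^ 2)) := by
  rw [gaussianPDFReal, Real.coe_toNNReal _ (sq_nonneg σ), sub_zero, sqrt_mul (by positivity),
    sqrt_sq hσ.le]

section HalfLineGaussianMoments

variable {σ : ℝ}

lemma integral_pow_mul_ite_pos_gaussianReal (k : ℕ) (hσ : 0 < σ) :
    ∫ x, x ^ k * (if 0 < x then 1 else 0) ∂gaussianReal 0 (σ ^ 2).toNNReal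
      = (√(2 * π) * σ)⁻¹ * ((√2 * σ) ^ (k + 1) / 2 * Gamma ((k + 1) / 2)) := by
  have hv : (σ ^ 2).toNNReal ≠ 0 := by simp [hσ.ne']
  rw [integral_gaussianReal_eq_integral_smul hv, ← integral_Ioi_pow_mul_exp_neg_sq_div k hσ,
    ← integral_const_mul, ← integral_indicator measurableSet_Ioi]
  congr with x
  by_cases hx : 0 < x
  · simp only [gaussianPDFReal_zero_sq hσ, hx, if_true, mul_one, smul_eq_mul, mem_Ioi,
      indicator_of_mem]
    ring
  · simp [hx]

lemma integral_ite_pos_gaussianReal (hσ : 0 < σ) :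
    ∫ x, (if 0 < x then (1 : ℝ) else 0) ∂gaussianReal 0 (σ ^ 2).toNNReal = 1 / 2 := by
  have h := integral_pow_mul_ite_pos_gaussianReal 0 hσ
  rw [show ((0 : ℕ) + 1 : ℝ) / 2 = 1 / 2 by norm_num, Gamma_one_half_eq,
    sqrt_mul zero_le_two] at h
  simp only [zero_add, pow_zero, pow_one, one_mul] at h
  rw [h]
  have : 0 < √π := sqrt_pos.2 pi_pos
  field_simp

lemma integral_mul_ite_pos_gaussianReal (hσ : 0 < σ) :
    ∫ x, x * (if 0 < x then (1 : ℝ) else 0) ∂gaussianReal 0 (σ ^ 2).toNNReal = σ / √(2 * π) := by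
  have h := integral_pow_mul_ite_pos_gaussianReal 1 hσ
  rw [show ((1 : ℕ) + 1 : ℝ) / 2 = 1 by norm_num, Gamma_one] at h
  simp only [pow_one] at h
  rw [h, mul_pow, sq_sqrt zero_le_two]
  have : 0 < √(2 * π) := sqrt_pos.2 (by positivity)
  field_simp

lemma integral_sq_mul_ite_pos_gaussianReal (hσ : 0 < σ) :
    ∫ x, x ^ 2 * (if 0 < x then (1 : ℝ) else 0) ∂gaussianReal 0 (σ ^ 2).toNNReal = σ ^ 2 / 2 := by
  have h := integral_pow_mul_ite_pos_gaussianReal 2 hσ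
  rw [show ((2 : ℕ) + 1 : ℝ) / 2 = 1 / 2 + 1 by norm_num, Gamma_add_one one_half_pos.ne',
    Gamma_one_half_eq, sqrt_mul zero_le_two] at h
  rw [h]
  have : 0 < √π := sqrt_pos.2 pi_pos
  have : 0 < √2 := sqrt_pos.2 two_pos
  field_simp
  rw [pow_succ, mul_pow, sq_sqrt zero_le_two]
  ring

end HalfLineGaussianMoments

lemma abs_mul_le_one_add_sq {a : ℝ} (ha : |a| ≤ 1) (t : ℝ) : |t * a| ≤ 1 + t ^ 2 := by
  rw [abs_mul]
  nlinarith [abs_nonneg t, abs_nonneg a, sq_abs t, sq_nonneg (|t| - 1)]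

lemma abs_sq_mul_le_one_add_sq {a : ℝ} (ha : |a| ≤ 1) (t : ℝ) : |t ^ 2 * a| ≤ 1 + t ^ 2 := by
  rw [abs_mul, abs_of_nonneg (sq_nonneg t)]
  nlinarith [abs_nonneg a, sq_nonneg t]

section Independence

variable {Ω : Type*} [MeasurableSpace Ω] {μ : Measure Ω} [IsFiniteMeasure μ] {X Y : Ω → ℝ}

lemma integrable_comp_of_abs_le_one_add_sq (hX : Measurable X)
    (hX2 : Integrable (fun ω => X ω ^ 2) μ) {f : ℝ → ℝ} (hf : Measurable f)
    (hbound : ∀ t, |f t| ≤ 1 + t ^ 2) : Integrable (fun ω => f (X ω)) μ :=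
  ((integrable_const 1).add hX2).mono' (hf.comp hX).aestronglyMeasurable
    (ae_of_all _ fun ω => hbound (X ω))

lemma ProbabilityTheory.IndepFun.integral_sq_sub_mul_comp_mul_comp (hXY : IndepFun X Y μ)
    (hX : Measurable X) (hY : Measurable Y) (hX2 : Integrable (fun ω => X ω ^ 2) μ)
    (hY2 : Integrable (fun ω => Y ω ^ 2) μ) {a b : ℝ → ℝ} (ha : Measurable a)
    (hb : Measurable b) (ha1 : ∀ t, |a t| ≤ 1) (hb1 : ∀ t, |b t| ≤ 1) :
    ∫ ω, (X ω - Y ω) ^ 2 * b (Y ω) * a (X ω) ∂μ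
      = (∫ ω, X ω ^ 2 * a (X ω) ∂μ) * (∫ ω, b (Y ω) ∂μ)
        - 2 * ((∫ ω, X ω * a (X ω) ∂μ) * (∫ ω, Y ω * b (Y ω) ∂μ))
        + (∫ ω, a (X ω) ∂μ) * (∫ ω, Y ω ^ 2 * b (Y ω) ∂μ) := by
  have hbound : ∀ {c : ℝ → ℝ}, (∀ t, |c t| ≤ 1) → ∀ t, |c t| ≤ 1 + t ^ 2 :=
    fun hc t => (hc t).trans (le_add_of_nonneg_right (sq_nonneg t))
  have hprod : ∀ {f g : ℝ → ℝ}, Measurable f → Measurable g → (∀ t, |f t| ≤ 1 + t ^ 2) →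
      (∀ t, |g t| ≤ 1 + t ^ 2) → Integrable (fun ω => f (X ω) * g (Y ω)) μ ∧
        ∫ ω, f (X ω) * g (Y ω) ∂μ = (∫ ω, f (X ω) ∂μ) * ∫ ω, g (Y ω) ∂μ :=
    fun hf hg hfb hgb =>
      ⟨(hXY.comp hf hg).integrable_mul (integrable_comp_of_abs_le_one_add_sq hX hX2 hf hfb)
          (integrable_comp_of_abs_le_one_add_sq hY hY2 hg hgb),
        hXY.integral_fun_comp_mul_comp hX.aemeasurable hY.aemeasurable
          hf.aestronglyMeasurable hg.aestronglyMeasurable⟩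
  obtain ⟨hi₁, he₁⟩ := hprod (f := fun t => t ^ 2 * a t) (by fun_prop) hb
    (fun t => abs_sq_mul_le_one_add_sq (ha1 t) t) (hbound hb1)
  obtain ⟨hi₂, he₂⟩ := hprod (f := fun t => t * a t) (g := fun t => t * b t) (by fun_prop)
    (by fun_prop) (fun t => abs_mul_le_one_add_sq (ha1 t) t)
    (fun t => abs_mul_le_one_add_sq (hb1 t) t)
  obtain ⟨hi₃, he₃⟩ := hprod (g := fun t => t ^ 2 * b t) ha (by fun_prop) (hbound ha1)
    (fun t => abs_sq_mul_le_one_add_sq (hb1 t) t)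
  have hi₁₂ : Integrable (fun ω => (X ω ^ 2 * a (X ω)) * b (Y ω)
      - 2 * ((X ω * a (X ω)) * (Y ω * b (Y ω)))) μ := hi₁.sub (hi₂.const_mul 2)
  calc ∫ ω, (X ω - Y ω) ^ 2 * b (Y ω) * a (X ω) ∂μ
      = ∫ ω, (X ω ^ 2 * a (X ω)) * b (Y ω) - 2 * ((X ω * a (X ω)) * (Y ω * b (Y ω)))
          + a (X ω) * (Y ω ^ 2 * b (Y ω)) ∂μ := by
        congr with ω
        ring
    _ = _ := by
      rw [integral_add hi₁₂ hi₃, integral_sub hi₁ (hi₂.const_mul 2), integral_const_mul,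
        he₁, he₂, he₃]

end Independence

theorem truncated_cross_moment_bound_general {Ω : Type*} [MeasurableSpace Ω]
    (μ : Measure Ω) [IsProbabilityMeasure μ]
    (γ Δ : ℝ) (hγ : 0 < γ)
    (U V : Ω → ℝ) (hU : Measurable U) (hV : Measurable V)
    (hUV : IndepFun U V μ)
    (hU2 : Integrable (fun ω => (U ω) ^ 2) μ)
    (hV2 : Integrable (fun ω => (V ω) ^ 2) μ)
    (hVlaw : Measure.map V μ = gaussianReal 0 (Real.toNNReal (γ ^ 2)))
    (hU2trunc : ∫ ω, (U ω) ^ 2 * (if U ω ≤ 0 then (1 : ℝ) else 0) ∂μ ≤ Δ ^ 2)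
    (hU1trunc : -∫ ω, U ω * (if U ω ≤ 0 then (1 : ℝ) else 0) ∂μ ≤ 1 + Δ ^ 2) :
    ∫ ω, (U ω - V ω) ^ 2 * (if 0 < V ω then (1 : ℝ) else 0)
        * (if U ω ≤ 0 then (1 : ℝ) else 0) ∂μ
      ≤ Δ ^ 2 / 2 + (2 + 2 * Δ ^ 2) / Real.sqrt (2 * π) * γ + γ ^ 2 / 2 := by
  have hle : Measurable fun t : ℝ => if t ≤ 0 then (1 : ℝ) else 0 :=
    measurable_const.ite measurableSet_Iic measurable_const
  have hpos : Measurable fun t : ℝ => if 0 < t then (1 : ℝ) else 0 :=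
    measurable_const.ite measurableSet_Ioi measurable_const
  have hind : ∀ (p : Prop) [Decidable p], |if p then (1 : ℝ) else 0| ≤ 1 := by
    intro p _
    split_ifs <;> simp
  have hlaw : ∀ g : ℝ → ℝ, Measurable g →
      ∫ ω, g (V ω) ∂μ = ∫ x, g x ∂gaussianReal 0 (γ ^ 2).toNNReal := fun g hg => by
    rw [← hVlaw, integral_map hV.aemeasurable hg.aestronglyMeasurable]
  rw [hUV.integral_sq_sub_mul_comp_mul_comp hU hV hU2 hV2 hle hpos (fun _ => hind _)
      (fun _ => hind _), hlaw _ hpos,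
    hlaw (fun t => t * if 0 < t then 1 else 0) (measurable_id.mul hpos),
    hlaw (fun t => t ^ 2 * if 0 < t then 1 else 0) ((measurable_id.pow_const 2).mul hpos),
    integral_ite_pos_gaussianReal hγ, integral_mul_ite_pos_gaussianReal hγ,
    integral_sq_mul_ite_pos_gaussianReal hγ]
  have hmass : ∫ ω, (if U ω ≤ 0 then (1 : ℝ) else 0) ∂μ ≤ 1 := by
    have h := norm_integral_le_of_norm_le_const (μ := μ)
      (f := fun ω => if U ω ≤ 0 then (1 : ℝ) else 0) (ae_of_all μ fun ω => hind (U ω ≤ 0))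
    rw [probReal_univ, mul_one] at h
    exact (le_abs_self _).trans h
  have hcross := mul_le_mul_of_nonneg_right hU1trunc (by positivity : 0 ≤ γ / √(2 * π))
  have hsq := mul_le_of_le_one_left (by positivity : 0 ≤ γ ^ 2 / 2) hmass
  rw [show (2 + 2 * Δ ^ 2) / √(2 * π) * γ = 2 * ((1 + Δ ^ 2) * (γ / √(2 * π))) by ring]
  linarith

/-- let `γ > 0`, `Δ ≥ 0`, and let `U, V` be independent real random variables
with finite second moments, `V ~ N(0, γ²)`, `E[U² 1_{U ≤ 0}] ≤ Δ²`, and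
`−E[U 1_{U ≤ 0}] ≤ 1 + Δ²`. Then
`E[(U − V)² 1_{V > 0} 1_{U ≤ 0}] ≤ Δ²/2 + ((2 + 2Δ²)/√(2π)) γ + γ²/2`. -/
theorem truncated_cross_moment_bound {Ω : Type*} [MeasurableSpace Ω]
    (μ : Measure Ω) [IsProbabilityMeasure μ]
    (γ Δ : ℝ) (hγ : 0 < γ) (hΔ : 0 ≤ Δ)
    (U V : Ω → ℝ) (hU : Measurable U) (hV : Measurable V)
    (hUV : IndepFun U V μ)
    (hU2 : Integrable (fun ω => (U ω) ^ 2) μ)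
    (hV2 : Integrable (fun ω => (V ω) ^ 2) μ)
    (hVlaw : Measure.map V μ = gaussianReal 0 (Real.toNNReal (γ ^ 2)))
    (hU2trunc : ∫ ω, (U ω) ^ 2 * (if U ω ≤ 0 then (1 : ℝ) else 0) ∂μ ≤ Δ ^ 2)
    (hU1trunc : -∫ ω, U ω * (if U ω ≤ 0 then (1 : ℝ) else 0) ∂μ ≤ 1 + Δ ^ 2) :
    ∫ ω, (U ω - V ω) ^ 2 * (if 0 < V ω then (1 : ℝ) else 0)
        * (if U ω ≤ 0 then (1 : ℝ) else 0) ∂μ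
      ≤ Δ ^ 2 / 2 + (2 + 2 * Δ ^ 2) / Real.sqrt (2 * π) * γ + γ ^ 2 / 2 :=
  truncated_cross_moment_bound_general μ γ Δ hγ U V hU hV hUV hU2 hV2 hVlaw hU2trunc hU1trunc
end

section
/- Let γ > 0 and Δ ≥ 0. Let Z and ε be independent real-valued random variables with finite second moments such that ε has the centered Gaussian distribution N(0, γ²), E[Z² · 1_{Z ≤ 0}] ≤ Δ², and −E[Z · 1_{Z ≤ 0}] ≤ 1 + Δ². Set Y = max{0, Z} + ε. Then E[ψ₀(Z, Y)] ≤ 3γ²/2 + Δ²/2 + ((2 + 2Δ²)/√(2π)) · γ, where ψ₀(z, y) = (z − y)² if y > 0 and ψ₀(z, y) = (max{0, z} − y)² if y ≤ 0. -/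
open Real MeasureTheory ProbabilityTheory

/-- `ψ₀(z, y) = (z − y)²` if `y > 0`, and `ψ₀(z, y) = (max{0, z} − y)²` if `y ≤ 0`. -/
noncomputable def psiZero (z y : ℝ) : ℝ :=
  if 0 < y then (z - y) ^ 2 else (max 0 z - y) ^ 2

/-! With `m = min Z 0 ≤ 0`, the loss splits pointwise as
`ψ₀(Z, max 0 Z + ε) = ε² + m² 1_{ε > 0} + 2 (-m) max 0 ε`.
Independence factorizes the expectations of the last two terms, and for `ε ~ N(0, γ²)` one has
`E ε² = γ²`, `P(ε > 0) = 1/2` and `E (max 0 ε) = γ / √(2π)`; the hypotheses on `Z` bound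
`E m² ≤ Δ²` and `E (-m) ≤ 1 + Δ²`. -/

open scoped NNReal

lemma integral_Ioi_mul_exp_neg_mul_sq {b : ℝ} (hb : 0 < b) :
    ∫ x in Set.Ioi (0 : ℝ), x * exp (-b * x ^ 2) = (2 * b)⁻¹ := by
  have h := integral_mul_cexp_neg_mul_sq (b := (b : ℂ)) (by simpa using hb)
  exact_mod_cast h

lemma integral_sq_gaussianReal (m : ℝ) (v : ℝ≥0) :
    ∫ x, x ^ 2 ∂gaussianReal m v = m ^ 2 + v := by
  have h := variance_id_gaussianReal (μ := m) (v := v)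
  rw [variance_eq_sub (memLp_id_gaussianReal 2)] at h
  simp only [Pi.pow_apply, id_eq, integral_id_gaussianReal] at h
  linarith

lemma measureReal_Ioi_zero_gaussianReal {v : ℝ≥0} (hv : v ≠ 0) :
    (gaussianReal 0 v).real (Set.Ioi 0) = 1 / 2 := by
  have := nullSingletonClass_gaussianReal (μ := 0) hv
  have hneg : (gaussianReal 0 v).map (fun x ↦ -x) = gaussianReal 0 v := by
    rw [gaussianReal_map_neg, neg_zero]
  have hsymm : (gaussianReal 0 v).real (Set.Iic 0) = (gaussianReal 0 v).real (Set.Ioi 0) := by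
    rw [← measureReal_congr Iio_ae_eq_Iic]
    conv_rhs => rw [← hneg, map_measureReal_apply measurable_neg measurableSet_Ioi]
    simp
  have hcompl := measureReal_compl (μ := gaussianReal 0 v) (measurableSet_Ioi (a := (0 : ℝ)))
  rw [Set.compl_Ioi, hsymm, probReal_univ] at hcompl
  linarith

lemma integral_max_zero_gaussianReal (v : ℝ≥0) :
    ∫ x, max 0 x ∂gaussianReal 0 v = √v / √(2 * π) := by
  rcases eq_or_ne v 0 with rfl | hv
  · simp [gaussianReal_zero_var]
  have hb : 0 < (2 * (v : ℝ))⁻¹ := by positivity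
  have hpdf : ∀ x, gaussianPDFReal 0 v x * max 0 x = (Set.Ioi 0).indicator
      (fun x ↦ (√(2 * π * v))⁻¹ * (x * exp (-(2 * (v : ℝ))⁻¹ * x ^ 2))) x := by
    intro x
    rcases le_or_gt x 0 with hx | hx
    · simp [hx, not_lt.mpr hx]
    · rw [Set.indicator_of_mem (Set.mem_Ioi.mpr hx), max_eq_right hx.le, gaussianPDFReal_def]
      ring_nf
  simp_rw [integral_gaussianReal_eq_integral_smul hv, smul_eq_mul, hpdf]
  rw [integral_indicator measurableSet_Ioi, integral_const_mul,
    integral_Ioi_mul_exp_neg_mul_sq hb, sqrt_mul (by positivity)]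
  field_simp
  exact (sq_sqrt v.2).symm

lemma psiZero_max_zero_add (z e : ℝ) :
    psiZero z (max 0 z + e)
      = e ^ 2 + min z 0 ^ 2 * (Set.Ioi 0).indicator 1 e + 2 * (-min z 0 * max 0 e) := by
  unfold psiZero
  rcases le_total 0 z with hz | hz
  · rw [max_eq_right hz, min_eq_right hz]
    split_ifs <;> ring
  · rw [max_eq_left hz, min_eq_left hz, zero_add]
    rcases lt_or_ge 0 e with he | he
    · rw [if_pos he, Set.indicator_of_mem (Set.mem_Ioi.2 he), Pi.one_apply, max_eq_right he.le]
      ring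
    · rw [if_neg he.not_gt, Set.indicator_of_notMem (Set.notMem_Ioi.2 he), max_eq_left he]
      ring

lemma integral_psiZero_max_zero_add {Ω : Type*} [MeasurableSpace Ω] {μ : Measure Ω}
    [IsFiniteMeasure μ] {Z ε : Ω → ℝ} (hZε : IndepFun Z ε μ) (hZ : MemLp Z 2 μ)
    (hε : MemLp ε 2 μ) :
    ∫ ω, psiZero (Z ω) (max 0 (Z ω) + ε ω) ∂μ
      = ∫ x, x ^ 2 ∂μ.map ε + (∫ ω, min (Z ω) 0 ^ 2 ∂μ) * (μ.map ε).real (Set.Ioi 0)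
        + 2 * ((∫ ω, -min (Z ω) 0 ∂μ) * ∫ x, max 0 x ∂μ.map ε) := by
  have hεm : AEMeasurable ε μ := hε.aestronglyMeasurable.aemeasurable
  have hZm : AEMeasurable Z μ := hZ.aestronglyMeasurable.aemeasurable
  have hmin : MemLp (fun ω ↦ min (Z ω) 0) 2 μ := hZ.inf (memLp_const 0)
  have hind : Measurable ((Set.Ioi (0 : ℝ)).indicator (1 : ℝ → ℝ)) :=
    measurable_const.indicator measurableSet_Ioi
  have hprod₁ : Integrable (fun ω ↦ min (Z ω) 0 ^ 2 * (Set.Ioi 0).indicator 1 (ε ω)) μ :=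
    (hZε.comp (φ := fun z ↦ min z 0 ^ 2) (by fun_prop) hind).integrable_mul hmin.integrable_sq
      (((integrable_const 1).indicator measurableSet_Ioi).comp_aemeasurable hεm)
  have hprod₂ : Integrable (fun ω ↦ -min (Z ω) 0 * max 0 (ε ω)) μ :=
    (hZε.comp (φ := fun z ↦ -min z 0) (ψ := fun e ↦ max 0 e) (by fun_prop)
      (by fun_prop)).integrable_mul (hmin.integrable one_le_two).neg
      ((integrable_const 0).sup (hε.integrable one_le_two))
  simp_rw [psiZero_max_zero_add]
  rw [integral_add (by exact hε.integrable_sq.add hprod₁) (hprod₂.const_mul 2),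
    integral_add hε.integrable_sq hprod₁, integral_const_mul,
    hZε.integral_fun_comp_mul_comp (f := fun z ↦ min z 0 ^ 2) hZm hεm (by fun_prop)
      hind.aestronglyMeasurable,
    hZε.integral_fun_comp_mul_comp (f := fun z ↦ -min z 0) (g := fun e ↦ max 0 e) hZm hεm
      (by fun_prop) (by fun_prop),
    integral_map hεm (by fun_prop), integral_map hεm (by fun_prop),
    ← integral_indicator_one measurableSet_Ioi, integral_map hεm hind.aestronglyMeasurable]

lemma min_zero_eq_mul_ite (z : ℝ) : min z 0 = z * if z ≤ 0 then 1 else 0 := by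
  split_ifs with hz
  · simp [hz]
  · simp [(not_le.mp hz).le]

lemma min_zero_sq_eq_mul_ite (z : ℝ) : min z 0 ^ 2 = z ^ 2 * if z ≤ 0 then 1 else 0 := by
  rw [min_zero_eq_mul_ite]
  split_ifs <;> ring

theorem psiZero_expectation_bound_general {Ω : Type*} [MeasurableSpace Ω]
    (μ : Measure Ω) [IsProbabilityMeasure μ]
    (γ Δ : ℝ) (hγ : 0 < γ)
    (Z ε : Ω → ℝ) (hZ : Measurable Z) (hε : Measurable ε)
    (hZε : IndepFun Z ε μ)
    (hZ2 : Integrable (fun ω => (Z ω) ^ 2) μ)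
    (hεlaw : Measure.map ε μ = gaussianReal 0 (Real.toNNReal (γ ^ 2)))
    (hZ2trunc : ∫ ω, (Z ω) ^ 2 * (if Z ω ≤ 0 then (1 : ℝ) else 0) ∂μ ≤ Δ ^ 2)
    (hZ1trunc : -∫ ω, Z ω * (if Z ω ≤ 0 then (1 : ℝ) else 0) ∂μ ≤ 1 + Δ ^ 2)
    (Y : Ω → ℝ) (hY : ∀ ω, Y ω = max 0 (Z ω) + ε ω) :
    ∫ ω, psiZero (Z ω) (Y ω) ∂μ
      ≤ 3 * γ ^ 2 / 2 + Δ ^ 2 / 2 + (2 + 2 * Δ ^ 2) / Real.sqrt (2 * π) * γ := by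
  have hZL2 : MemLp Z 2 μ := (memLp_two_iff_integrable_sq hZ.aestronglyMeasurable).2 hZ2
  have hεL2 : MemLp ε 2 μ :=
    (memLp_map_measure_iff aestronglyMeasurable_id hε.aemeasurable).1
      (hεlaw ▸ memLp_id_gaussianReal 2)
  have hv : Real.toNNReal (γ ^ 2) ≠ 0 := by positivity
  have hsqrt : √(Real.toNNReal (γ ^ 2) : ℝ) = γ := by
    rw [Real.coe_toNNReal _ (sq_nonneg γ), sqrt_sq hγ.le]
  simp_rw [hY]
  rw [integral_psiZero_max_zero_add hZε hZL2 hεL2, hεlaw, integral_sq_gaussianReal,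
    measureReal_Ioi_zero_gaussianReal hv, integral_max_zero_gaussianReal, hsqrt,
    Real.coe_toNNReal _ (sq_nonneg γ)]
  simp_rw [min_zero_sq_eq_mul_ite, min_zero_eq_mul_ite, integral_neg]
  have hc : 0 ≤ γ / √(2 * π) := by positivity
  have hmixed := mul_le_mul_of_nonneg_right hZ1trunc hc
  rw [show (2 + 2 * Δ ^ 2) / √(2 * π) * γ = 2 * ((1 + Δ ^ 2) * (γ / √(2 * π))) by ring]
  linarith [sq_nonneg γ]

/-- let `γ > 0`, `Δ ≥ 0`, and let `Z, ε` be independent real random variables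
with finite second moments, `ε ~ N(0, γ²)`, `E[Z² 1_{Z ≤ 0}] ≤ Δ²`,
`−E[Z 1_{Z ≤ 0}] ≤ 1 + Δ²`, and set `Y = max{0, Z} + ε`. Then
`E[ψ₀(Z, Y)] ≤ 3γ²/2 + Δ²/2 + ((2 + 2Δ²)/√(2π)) γ`. -/
theorem psiZero_expectation_bound {Ω : Type*} [MeasurableSpace Ω]
    (μ : Measure Ω) [IsProbabilityMeasure μ]
    (γ Δ : ℝ) (hγ : 0 < γ) (hΔ : 0 ≤ Δ)
    (Z ε : Ω → ℝ) (hZ : Measurable Z) (hε : Measurable ε)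
    (hZε : IndepFun Z ε μ)
    (hZ2 : Integrable (fun ω => (Z ω) ^ 2) μ)
    (hε2 : Integrable (fun ω => (ε ω) ^ 2) μ)
    (hεlaw : Measure.map ε μ = gaussianReal 0 (Real.toNNReal (γ ^ 2)))
    (hZ2trunc : ∫ ω, (Z ω) ^ 2 * (if Z ω ≤ 0 then (1 : ℝ) else 0) ∂μ ≤ Δ ^ 2)
    (hZ1trunc : -∫ ω, Z ω * (if Z ω ≤ 0 then (1 : ℝ) else 0) ∂μ ≤ 1 + Δ ^ 2)
    (Y : Ω → ℝ) (hY : ∀ ω, Y ω = max 0 (Z ω) + ε ω) :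
    ∫ ω, psiZero (Z ω) (Y ω) ∂μ
      ≤ 3 * γ ^ 2 / 2 + Δ ^ 2 / 2 + (2 + 2 * Δ ^ 2) / Real.sqrt (2 * π) * γ :=
  psiZero_expectation_bound_general μ γ Δ hγ Z ε hZ hε hZε hZ2 hεlaw hZ2trunc hZ1trunc Y hY
end
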